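/- Let f : H → (-∞,∞] and g : G → (-∞,∞] be proper closed convex functions and A : H → G a continuous linear map. Suppose y* minimizes y ↦ (f* ∘ A*)*(y) + g(y), and there exists q with −q ∈ ∂g(y*) and y* ∈ ∂(f* ∘ A*)(q). If x* minimizes f over {x : A x = y*} and strong duality holds for this constrained problem (with dual optimum q), then x* is a minimizer of x ↦ f(x) + g(A x). -/

import Mathlib

/-
Take `c = f*(A* q)`; strong duality at a feasible `x*` says `f x* = ⟨q, y*⟩ - c`, and
properness of `f` makes `c` finite. For any `x`, Fenchel–Young gives `f x ≥ ⟨q, A x⟩ - c`,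
and the subgradient inequality for `-q ∈ ∂g(y*)` gives `g (A x) ≥ g y* + ⟨q, y*⟩ - ⟨q, A x⟩`.
Adding the two, the terms `⟨q, A x⟩` cancel and what remains is `f x* + g y*`.
-/

noncomputable def econj {E : Type*} [NormedAddCommGroup E] [InnerProductSpace ℝ E]
    (f : E → EReal) (v : E) : EReal :=
  ⨆ x : E, ((inner ℝ v x : ℝ) : EReal) - f x

def EConvex {E : Type*} [NormedAddCommGroup E] [InnerProductSpace ℝ E] (f : E → EReal) : Prop :=
  ∀ x y : E, ∀ a b : ℝ, 0 ≤ a → 0 ≤ b → a + b = 1 →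
    f (a • x + b • y) ≤ (a : EReal) * f x + (b : EReal) * f y

def Proper {E : Type*} (f : E → EReal) : Prop :=
  (∃ x, f x ≠ ⊤) ∧ ∀ x, f x ≠ ⊥

/-- `v ∈ ∂f(x)`: the convex subdifferential. -/
def SubdiffAt {E : Type*} [NormedAddCommGroup E] [InnerProductSpace ℝ E]
    (f : E → EReal) (x v : E) : Prop :=
  ∀ y : E, f x + ((inner ℝ v (y - x) : ℝ) : EReal) ≤ f y

section Conjugate

variable {E : Type*} [NormedAddCommGroup E] [InnerProductSpace ℝ E]

theorem inner_sub_le_econj (f : E → EReal) (v x : E) :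
    ((inner ℝ v x : ℝ) : EReal) - f x ≤ econj f v :=
  le_iSup (fun z => ((inner ℝ v z : ℝ) : EReal) - f z) x

theorem econj_ne_bot {f : E → EReal} {x₀ : E} (hx₀ : f x₀ ≠ ⊤) (v : E) : econj f v ≠ ⊥ := by
  refine ne_bot_of_le_ne_bot ?_ (inner_sub_le_econj f v x₀)
  induction h : f x₀ with
  | bot => simp
  | coe r => exact (EReal.coe_sub _ r ▸ EReal.coe_ne_bot _)
  | top => exact absurd h hx₀

theorem coe_inner_sub_le_of_econj_eq (f : E → EReal) {v : E} {c : ℝ} (hc : econj f v = c)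
    (x : E) : ((inner ℝ v x - c : ℝ) : EReal) ≤ f x := by
  have h := inner_sub_le_econj f v x
  rw [hc, EReal.sub_le_iff_le_add (.inr (EReal.coe_ne_top c)) (.inr (EReal.coe_ne_bot c))] at h
  exact EReal.coe_sub _ c ▸ EReal.sub_le_of_le_add' h

end Conjugate

theorem stmt12_general {H G : Type*} [NormedAddCommGroup H] [InnerProductSpace ℝ H] [CompleteSpace H]
    [NormedAddCommGroup G] [InnerProductSpace ℝ G] [CompleteSpace G]
    (f : H → EReal) (hf : Proper f)
    (g : G → EReal)
    (A : H →L[ℝ] G) (ys : G)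
    (q : G) (hq1 : SubdiffAt g ys (-q))
    (xs : H) (hxfeas : A xs = ys)
    (hstrong : f xs = -econj f (ContinuousLinearMap.adjoint A q) + ((inner ℝ q ys : ℝ) : EReal)) :
    ∀ x : H, f xs + g (A xs) ≤ f x + g (A x) := by
  intro x
  rw [hxfeas]
  have hc_top : econj f (ContinuousLinearMap.adjoint A q) ≠ ⊤ := fun h => by
    rw [h, EReal.neg_top, EReal.bot_add] at hstrong
    exact hf.2 xs hstrong
  obtain ⟨x₀, hx₀⟩ := hf.1
  set c := (econj f (ContinuousLinearMap.adjoint A q)).toReal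
  have hc : econj f (ContinuousLinearMap.adjoint A q) = c :=
    (EReal.coe_toReal hc_top (econj_ne_bot hx₀ _)).symm
  have hfxs : f xs = ((inner ℝ q ys - c : ℝ) : EReal) := by
    rw [hstrong, hc, ← EReal.coe_neg, ← EReal.coe_add, neg_add_eq_sub]
  have hfx : ((inner ℝ q (A x) - c : ℝ) : EReal) ≤ f x := by
    simpa only [ContinuousLinearMap.adjoint_inner_left] using
      coe_inner_sub_le_of_econj_eq f hc x
  have hgx : g ys + ((inner ℝ q ys - inner ℝ q (A x) : ℝ) : EReal) ≤ g (A x) := by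
    simpa only [inner_neg_left, inner_sub_right, sub_neg_eq_add, neg_add_eq_sub] using hq1 (A x)
  calc f xs + g ys
      = ((inner ℝ q (A x) - c : ℝ) : EReal)
          + (g ys + ((inner ℝ q ys - inner ℝ q (A x) : ℝ) : EReal)) := by
        rw [hfxs, add_left_comm, ← EReal.coe_add, add_comm]
        congr 2
        ring
    _ ≤ f x + g (A x) := add_le_add hfx hgx

/-- if `y*` minimizes `(f*∘A*)* + g`, `−q ∈ ∂g(y*)`, `y* ∈ ∂(f*∘A*)(q)`,
and `x*` minimizes `f` over `{x : A x = y*}` with strong duality (dual optimum `q`),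
then `x*` minimizes `f + g∘A`. -/
theorem stmt12 {H G : Type*} [NormedAddCommGroup H] [InnerProductSpace ℝ H] [CompleteSpace H]
    [NormedAddCommGroup G] [InnerProductSpace ℝ G] [CompleteSpace G]
    (f : H → EReal) (hf : Proper f) (hfc : LowerSemicontinuous f) (hfconv : EConvex f)
    (g : G → EReal) (hg : Proper g) (hgc : LowerSemicontinuous g) (hgconv : EConvex g)
    (A : H →L[ℝ] G) (ys : G)
    (hymin : ∀ y : G,
      econj (fun v : G => econj f (ContinuousLinearMap.adjoint A v)) ys + g ys
        ≤ econj (fun v : G => econj f (ContinuousLinearMap.adjoint A v)) y + g y)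
    (q : G) (hq1 : SubdiffAt g ys (-q))
    (hq2 : SubdiffAt (fun v : G => econj f (ContinuousLinearMap.adjoint A v)) q ys)
    (xs : H) (hxfeas : A xs = ys)
    (hxmin : ∀ x : H, A x = ys → f xs ≤ f x)
    (hstrong : f xs = -econj f (ContinuousLinearMap.adjoint A q) + ((inner ℝ q ys : ℝ) : EReal)) :
    ∀ x : H, f xs + g (A xs) ≤ f x + g (A x) :=
  stmt12_general f hf g A ys q hq1 xs hxfeas hstrong
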